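/- arXiv:math/0508081 — 10 statements merged into one kernel-verified Lean document; each statement's English description precedes it below -/
import Mathlib

section
/- Let X be a graph on n vertices with adjacency matrix A and vertex degrees d_1,...,d_n, possibly with loops. Let T = diag(t_1,...,t_n) be a diagonal matrix such that T + A is positive semidefinite. If S is an independent set of size s (no two distinct vertices of S adjacent) containing s_1 looped vertices, then (s^2/n^2)·Σ_{i∈V}(t_i + d_i) − (2s/n)·Σ_{i∈S}(t_i + d_i) + Σ_{i∈S} t_i ≥ −s_1. -/
/-!
With `M = T + A` and `z` the characteristic vector of `S`, positive semidefiniteness gives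
`2 zᵀM(c𝟙) ≤ zᵀMz + (c𝟙)ᵀM(c𝟙)` for every real `c`; here `c = s/n`. The row sums of `M` are
`tᵢ + dᵢ`, and since `S` is independent, `zᵀMz = Σ_{i∈S} (tᵢ + Aᵢᵢ) = Σ_{i∈S} tᵢ + s₁`.
-/

open Matrix Finset

namespace Matrix

variable {ι R : Type*} [Fintype ι]

lemma PosSemidef.two_mul_dotProduct_mulVec_le [CommRing R] [PartialOrder R] [StarRing R]
    [TrivialStar R] [IsOrderedAddMonoid R] {M : Matrix ι ι R} (hM : M.PosSemidef) (x y : ι → R) :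
    2 * (x ⬝ᵥ M *ᵥ y) ≤ x ⬝ᵥ M *ᵥ x + y ⬝ᵥ M *ᵥ y := by
  have hMt : Mᵀ = M := by simpa [conjTranspose_eq_transpose_of_trivial] using hM.isHermitian.eq
  have hyx : y ⬝ᵥ M *ᵥ x = x ⬝ᵥ M *ᵥ y := by rw [← dotProduct_transpose_mulVec, hMt]
  have h := hM.dotProduct_mulVec_nonneg (x - y)
  rw [star_trivial, mulVec_sub, dotProduct_sub, sub_dotProduct, sub_dotProduct, hyx] at h
  rw [← sub_nonneg]
  convert h using 1
  ring

lemma indicator_one_dotProduct [NonAssocSemiring R] (S : Finset ι) (v : ι → R) :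
    Set.indicator (S : Set ι) 1 ⬝ᵥ v = ∑ i ∈ S, v i := by
  classical
  simp only [dotProduct, Set.indicator_apply, Finset.mem_coe, Pi.one_apply, ite_mul, one_mul,
    zero_mul, Finset.sum_ite_mem, Finset.univ_inter]

lemma mulVec_indicator_one_apply [NonAssocSemiring R] (A : Matrix ι ι R) (S : Finset ι) (i : ι) :
    (A *ᵥ Set.indicator (S : Set ι) 1) i = ∑ j ∈ S, A i j := by
  classical
  simp only [mulVec, dotProduct, Set.indicator_apply, Finset.mem_coe, Pi.one_apply, mul_ite,
    mul_one, mul_zero, Finset.sum_ite_mem, Finset.univ_inter]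

lemma mulVec_indicator_one_apply_of_mem [NonAssocSemiring R] {A : Matrix ι ι R} {S : Finset ι}
    (hS : ∀ i ∈ S, ∀ j ∈ S, i ≠ j → A i j = 0) {i : ι} (hi : i ∈ S) :
    (A *ᵥ Set.indicator (S : Set ι) 1) i = A i i := by
  rw [mulVec_indicator_one_apply, Finset.sum_eq_single_of_mem i hi]
  exact fun j hj hji => hS i hi j hj hji.symm

end Matrix

theorem stmt0_general (n : ℕ) (A : Matrix (Fin n) (Fin n) ℝ)
    (t : Fin n → ℝ)
    (hpsd : (Matrix.diagonal t + A).PosSemidef)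
    (S : Finset (Fin n))
    (hind : ∀ i ∈ S, ∀ j ∈ S, i ≠ j → A i j = 0)
    (d : Fin n → ℝ) (hd : ∀ i, d i = ∑ j, A i j)
    (s s₁ : ℕ)
    (hs₁ : (s₁ : ℝ) = ∑ i ∈ S, A i i) :
    ((s : ℝ) ^ 2 / (n : ℝ) ^ 2) * (∑ i, (t i + d i))
      - 2 * ((s : ℝ) / n) * (∑ i ∈ S, (t i + d i))
      + ∑ i ∈ S, t i ≥ -(s₁ : ℝ) := by
  set M := Matrix.diagonal t + A
  set z : Fin n → ℝ := Set.indicator (S : Set (Fin n)) 1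
  set c : ℝ := (s : ℝ) / n
  have hrow : M *ᵥ 1 = t + d := by
    ext i
    rw [add_mulVec, Pi.add_apply, mulVec_diagonal, Pi.one_apply, mul_one, mulVec, dotProduct_one,
      Pi.add_apply, hd]
  have hzz : z ⬝ᵥ M *ᵥ z = ∑ i ∈ S, t i + s₁ := by
    rw [indicator_one_dotProduct, hs₁, ← sum_add_distrib]
    refine sum_congr rfl fun i hi => ?_
    simp [M, z, add_mulVec, mulVec_diagonal, hi, mulVec_indicator_one_apply_of_mem hind hi]
  have hzc : z ⬝ᵥ M *ᵥ (c • 1) = c * ∑ i ∈ S, (t i + d i) := by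
    rw [mulVec_smul, dotProduct_smul, hrow, indicator_one_dotProduct, smul_eq_mul]
    rfl
  have hcc : (c • 1) ⬝ᵥ M *ᵥ (c • (1 : Fin n → ℝ)) = c ^ 2 * ∑ i, (t i + d i) := by
    rw [mulVec_smul, hrow, smul_dotProduct, dotProduct_smul, one_dotProduct, smul_eq_mul,
      smul_eq_mul, ← mul_assoc, sq]
    rfl
  have key := hpsd.two_mul_dotProduct_mulVec_le z (c • 1)
  rw [hzz, hzc, hcc] at key
  rw [← div_pow]
  linarith

/-- Lemma (genbound): general quadratic-form bound for independent sets in graphs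
with loops, given a diagonal matrix `T = diagonal t` with `T + A` positive semidefinite. -/
theorem stmt0 (n : ℕ) (hn : 0 < n) (A : Matrix (Fin n) (Fin n) ℝ)
    (hsym : A.IsSymm) (h01 : ∀ i j, A i j = 0 ∨ A i j = 1)
    (t : Fin n → ℝ)
    (hpsd : (Matrix.diagonal t + A).PosSemidef)
    (S : Finset (Fin n))
    (hind : ∀ i ∈ S, ∀ j ∈ S, i ≠ j → A i j = 0)
    (d : Fin n → ℝ) (hd : ∀ i, d i = ∑ j, A i j)
    (s s₁ : ℕ) (hs : s = S.card)
    (hs₁ : (s₁ : ℝ) = ∑ i ∈ S, A i i) :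
    ((s : ℝ) ^ 2 / (n : ℝ) ^ 2) * (∑ i, (t i + d i))
      - 2 * ((s : ℝ) / n) * (∑ i ∈ S, (t i + d i))
      + ∑ i ∈ S, t i ≥ -(s₁ : ℝ) :=
  stmt0_general n A t hpsd S hind d hd s s₁ hs₁
end

section
/- Let X be a k-regular loopless graph on n vertices and let τ be the least eigenvalue of its adjacency matrix A. Then any independent set S satisfies |S| ≤ n·(−τ)/(k − τ). -/
open Matrix Finset

/-! For `f = n • 1_S - |S| • 1`, regularity and the independence of `S` give
`fᵀ A f = -n |S|² k`, while `fᵀ f = n |S| (n - |S|)`. Since `τ` bounds every eigenvalue of the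
symmetric `A`, `A - τ I` is positive semidefinite and
`τ fᵀ f ≤ fᵀ A f`, which rearranges to `|S| (k - τ) ≤ -τ n`. -/

section

variable {ι : Type*} [Fintype ι]

theorem dotProduct_indicator_one (v : ι → ℝ) (S : Finset ι) :
    v ⬝ᵥ (S : Set ι).indicator 1 = ∑ i ∈ S, v i := by
  classical
  simp [dotProduct, Set.indicator_apply, Finset.sum_ite_mem]

theorem indicator_one_dotProduct (v : ι → ℝ) (S : Finset ι) :
    (S : Set ι).indicator 1 ⬝ᵥ v = ∑ i ∈ S, v i := by
  rw [dotProduct_comm, dotProduct_indicator_one]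

noncomputable def Finset.balancedIndicator (S : Finset ι) : ι → ℝ :=
  (Fintype.card ι : ℝ) • (S : Set ι).indicator 1 - (#S : ℝ) • 1

theorem Finset.balancedIndicator_dotProduct_self (S : Finset ι) :
    S.balancedIndicator ⬝ᵥ S.balancedIndicator =
      Fintype.card ι * #S * (Fintype.card ι - #S) := by
  rw [balancedIndicator]
  set u : ι → ℝ := (S : Set ι).indicator 1
  have h1u : 1 ⬝ᵥ u = #S := by simp [u, dotProduct_indicator_one]
  have huu : u ⬝ᵥ u = #S := by
    rw [dotProduct_indicator_one, sum_congr rfl fun i hi => Set.indicator_of_mem (mem_coe.2 hi) _]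
    simp
  simp only [dotProduct_sub, sub_dotProduct, dotProduct_smul, smul_dotProduct, huu,
    dotProduct_comm u, h1u, one_dotProduct_one, smul_eq_mul]
  ring

namespace Matrix.IsSymm

variable {A : Matrix ι ι ℝ}

theorem mul_dotProduct_self_le_dotProduct_mulVec (hA : A.IsSymm) {τ : ℝ}
    (hτ : ∀ (μ : ℝ) (v : ι → ℝ), v ≠ 0 → A *ᵥ v = μ • v → τ ≤ μ) (x : ι → ℝ) :
    τ * (x ⬝ᵥ x) ≤ x ⬝ᵥ (A *ᵥ x) := by
  classical
  have hB : (A - τ • 1).IsHermitian :=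
    isHermitian_iff_isSymm.mpr (hA.sub (isSymm_one.smul τ))
  have hBv (v : ι → ℝ) : (A - τ • 1) *ᵥ v = A *ᵥ v - τ • v := by
    rw [sub_mulVec, smul_mulVec, one_mulVec]
  have hPSD : (A - τ • 1).PosSemidef := by
    refine hB.posSemidef_iff_eigenvalues_nonneg.mpr fun i => ?_
    set v : ι → ℝ := ⇑(hB.eigenvectorBasis i)
    have hv : v ≠ 0 := (WithLp.ofLp_eq_zero 2).ne.2 <| hB.eigenvectorBasis.orthonormal.ne_zero i
    have hAv : A *ᵥ v = (hB.eigenvalues i + τ) • v := by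
      rw [add_smul, ← sub_eq_iff_eq_add, ← hBv]
      exact hB.mulVec_eigenvectorBasis i
    simpa using hτ _ v hv hAv
  have := hPSD.dotProduct_mulVec_nonneg x
  rw [hBv, star_trivial, dotProduct_sub, dotProduct_smul, smul_eq_mul] at this
  linarith

theorem le_apply_self [DecidableEq ι] (hA : A.IsSymm) {τ : ℝ}
    (hτ : ∀ (μ : ℝ) (v : ι → ℝ), v ≠ 0 → A *ᵥ v = μ • v → τ ≤ μ) (i : ι) : τ ≤ A i i := by
  simpa using hA.mul_dotProduct_self_le_dotProduct_mulVec hτ (Pi.single i 1)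

theorem balancedIndicator_dotProduct_mulVec (hA : A.IsSymm) {k : ℝ}
    (hreg : ∀ i, ∑ j, A i j = k) {S : Finset ι} (hS : ∀ i ∈ S, ∀ j ∈ S, A i j = 0) :
    S.balancedIndicator ⬝ᵥ (A *ᵥ S.balancedIndicator) = -(Fintype.card ι * #S ^ 2 * k) := by
  rw [balancedIndicator]
  set u : ι → ℝ := (S : Set ι).indicator 1
  have hA1 : A *ᵥ 1 = k • 1 := by
    ext i
    simp [mulVec, dotProduct_one, hreg]
  have huAu : u ⬝ᵥ (A *ᵥ u) = 0 := by
    simp [u, indicator_one_dotProduct, mulVec, dotProduct_indicator_one,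
      sum_eq_zero (fun i hi => sum_eq_zero (hS i hi))]
  have h1u : 1 ⬝ᵥ u = #S := by simp [u, dotProduct_indicator_one]
  have h1Au : 1 ⬝ᵥ (A *ᵥ u) = k * #S := by
    rw [dotProduct_mulVec, ← hA.eq, vecMul_transpose, hA1, smul_dotProduct, h1u, smul_eq_mul]
  simp only [mulVec_sub, mulVec_smul, hA1, dotProduct_sub, sub_dotProduct, dotProduct_smul,
    smul_dotProduct, huAu, h1Au, dotProduct_comm u, h1u, one_dotProduct_one, smul_eq_mul]
  ring

theorem card_mul_sub_le_card_mul_neg (hA : A.IsSymm) (hloop : ∀ i, A i i = 0) {k : ℝ}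
    (hreg : ∀ i, ∑ j, A i j = k) {τ : ℝ}
    (hτ : ∀ (μ : ℝ) (v : ι → ℝ), v ≠ 0 → A *ᵥ v = μ • v → τ ≤ μ) {S : Finset ι}
    (hS : ∀ i ∈ S, ∀ j ∈ S, i ≠ j → A i j = 0) :
    (#S : ℝ) * (k - τ) ≤ Fintype.card ι * (-τ) := by
  classical
  have hS' : ∀ i ∈ S, ∀ j ∈ S, A i j = 0 := fun i hi j hj => by
    rcases eq_or_ne i j with rfl | hij
    exacts [hloop i, hS i hi j hj hij]
  have key := hA.mul_dotProduct_self_le_dotProduct_mulVec hτ S.balancedIndicator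
  rw [S.balancedIndicator_dotProduct_self, hA.balancedIndicator_dotProduct_mulVec hreg hS'] at key
  rcases isEmpty_or_nonempty ι with hι | ⟨⟨i⟩⟩
  · simp [S.eq_empty_of_isEmpty]
  have hτ0 : τ ≤ 0 := (hA.le_apply_self hτ i).trans_eq (hloop i)
  have hn : (0 : ℝ) < Fintype.card ι := by exact_mod_cast Fintype.card_pos_iff.2 ⟨i⟩
  rcases (Nat.cast_nonneg (α := ℝ) #S).eq_or_lt with hs | hs
  · rw [← hs]
    nlinarith
  · nlinarith [mul_pos hn hs]

end Matrix.IsSymm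

end

theorem stmt1_general (n k : ℕ) (hk : 1 ≤ k)
    (A : Matrix (Fin n) (Fin n) ℝ) (hsym : A.IsSymm)
    (hloop : ∀ i, A i i = 0)
    (hreg : ∀ i, ∑ j, A i j = k)
    (τ : ℝ)
    (hτmin : ∀ (μ : ℝ) (v : Fin n → ℝ), v ≠ 0 → A.mulVec v = μ • v → τ ≤ μ)
    (S : Finset (Fin n)) (hind : ∀ i ∈ S, ∀ j ∈ S, i ≠ j → A i j = 0) :
    (S.card : ℝ) ≤ n * (-τ) / (k - τ) := by
  obtain rfl | hn := Nat.eq_zero_or_pos n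
  · simp [S.eq_empty_of_isEmpty]
  have hτ0 : τ ≤ 0 := (hsym.le_apply_self hτmin ⟨0, hn⟩).trans_eq (hloop _)
  have hk' : (1 : ℝ) ≤ k := by exact_mod_cast hk
  rw [le_div_iff₀ (by linarith)]
  simpa using hsym.card_mul_sub_le_card_mul_neg hloop hreg hτmin hind

/-- Delsarte–Hoffman ratio bound: in a `k`-regular loopless graph with least adjacency
eigenvalue `τ`, any independent set `S` satisfies `|S| ≤ n·(−τ)/(k−τ)`. -/
theorem stmt1 (n k : ℕ) (hn : 0 < n) (hk : 1 ≤ k)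
    (A : Matrix (Fin n) (Fin n) ℝ) (hsym : A.IsSymm)
    (h01 : ∀ i j, A i j = 0 ∨ A i j = 1) (hloop : ∀ i, A i i = 0)
    (hreg : ∀ i, ∑ j, A i j = k)
    (τ : ℝ)
    (hτeig : ∃ v : Fin n → ℝ, v ≠ 0 ∧ A.mulVec v = τ • v)
    (hτmin : ∀ (μ : ℝ) (v : Fin n → ℝ), v ≠ 0 → A.mulVec v = μ • v → τ ≤ μ)
    (S : Finset (Fin n)) (hind : ∀ i ∈ S, ∀ j ∈ S, i ≠ j → A i j = 0) :
    (S.card : ℝ) ≤ n * (-τ) / (k - τ) :=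
  stmt1_general n k hk A hsym hloop hreg τ hτmin S hind
end

section
/- Let X be a k-regular graph on n vertices possibly with loops, and τ the least eigenvalue of its adjacency matrix. If S is an independent set of size s containing s_1 looped vertices, then s ≤ n·(−τ + sqrt(τ² + 4·s_1·(k−τ)/n)) / (2(k−τ)), provided k > τ. -/
/-!
The matrix `B = A - τ • 1` is positive semidefinite, and the all-ones vector `𝟙` is an
eigenvector of `B` with eigenvalue `k - τ`. Evaluating the quadratic form of `B` at the
component of the indicator vector `u` of `S` orthogonal to `𝟙` gives
`(k - τ) s² ≤ n · uᵀ B u = n (s₁ - τ s)`, where independence of `S` kills the off-diagonal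
terms of `uᵀ B u`. The bound is the larger root of this quadratic in `s`.
-/

open Matrix Finset

variable {ι R : Type*} [Fintype ι]

theorem Matrix.IsSymm.posSemidef_sub_smul_one [DecidableEq ι] {A : Matrix ι ι ℝ}
    (hA : A.IsSymm) {τ : ℝ} (hτ : ∀ (μ : ℝ) (v : ι → ℝ), v ≠ 0 → A *ᵥ v = μ • v → τ ≤ μ) :
    (A - τ • 1).PosSemidef := by
  have hB : (A - τ • 1 : Matrix ι ι ℝ).IsHermitian :=
    isHermitian_iff_isSymm.2 (hA.sub (isSymm_one.smul τ))
  refine hB.posSemidef_iff_eigenvalues_nonneg.2 fun i => ?_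
  have hv : (hB.eigenvectorBasis i : ι → ℝ) ≠ 0 :=
    (WithLp.ofLp_eq_zero 2).ne.2 (hB.eigenvectorBasis.orthonormal.ne_zero i)
  have hAv : A *ᵥ hB.eigenvectorBasis i = (hB.eigenvalues i + τ) • hB.eigenvectorBasis i := by
    have := hB.mulVec_eigenvectorBasis i
    rw [sub_mulVec, smul_mulVec, one_mulVec, sub_eq_iff_eq_add] at this
    rw [this, add_smul]
  simpa using hτ _ _ hv hAv

theorem Matrix.PosSemidef.mul_sq_dotProduct_le {B : Matrix ι ι ℝ} (hB : B.PosSemidef)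
    {j : ι → ℝ} {μ : ℝ} (hj : B *ᵥ j = μ • j) (u : ι → ℝ) :
    μ * (u ⬝ᵥ j) ^ 2 ≤ (j ⬝ᵥ j) * (u ⬝ᵥ B *ᵥ u) := by
  set p := u ⬝ᵥ j
  set q := j ⬝ᵥ j
  have hjBu : j ⬝ᵥ B *ᵥ u = μ * p := by
    rw [← dotProduct_transpose_mulVec, (isHermitian_iff_isSymm.1 hB.isHermitian).eq, hj,
      dotProduct_smul, smul_eq_mul]
  -- `q • u - p • j` is `q` times the component of `u` orthogonal to `j`.
  have hform : (q • u - p • j) ⬝ᵥ B *ᵥ (q • u - p • j)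
      = q * (q * (u ⬝ᵥ B *ᵥ u) - μ * p ^ 2) := by
    simp only [mulVec_sub, mulVec_smul, hj, sub_dotProduct, dotProduct_sub, smul_dotProduct,
      dotProduct_smul, hjBu, smul_eq_mul]
    simp only [p, q]
    ring
  have hnonneg := hB.dotProduct_mulVec_nonneg (q • u - p • j)
  rw [star_trivial, hform] at hnonneg
  have hq : 0 ≤ q := by simpa using dotProduct_star_self_nonneg j
  rcases hq.eq_or_lt with hq | hq
  · have hj0 : j = 0 := dotProduct_self_eq_zero.1 hq.symm
    simp [p, q, hj0]
  · nlinarith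

theorem Matrix.mulVec_one_of_forall_sum_eq [NonAssocSemiring R] {A : Matrix ι ι R} {c : R}
    (h : ∀ i, ∑ j, A i j = c) : A *ᵥ 1 = c • 1 := by
  ext i
  simpa [mulVec, dotProduct_one] using h i

theorem Matrix.indicator_dotProduct_mulVec_indicator [Semiring R] [DecidableEq ι]
    (A : Matrix ι ι R) {S : Finset ι} (hS : ∀ i ∈ S, ∀ j ∈ S, i ≠ j → A i j = 0) :
    (S : Set ι).indicator 1 ⬝ᵥ A *ᵥ (S : Set ι).indicator 1 = ∑ i ∈ S, A i i := by
  simp only [dotProduct, mulVec, Set.indicator_apply, Finset.mem_coe, Pi.one_apply, mul_ite,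
    mul_one, mul_zero, ite_mul, one_mul, zero_mul, Finset.sum_ite_mem, Finset.univ_inter]
  refine Finset.sum_congr rfl fun i hi => ?_
  exact Finset.sum_eq_single_of_mem i hi fun j hj hji => hS i hi j hj hji.symm

theorem Matrix.indicator_dotProduct_one [NonAssocSemiring R] (S : Finset ι) :
    (S : Set ι).indicator 1 ⬝ᵥ (1 : ι → R) = #S := by
  rw [dotProduct_one, Finset.sum_indicator_subset _ (subset_univ S)]
  simp

theorem le_quadratic_root_of_mul_sq_add_mul_le {a b c x : ℝ} (ha : 0 < a)
    (h : a * x ^ 2 + b * x ≤ c) : x ≤ (-b + √(b ^ 2 + 4 * a * c)) / (2 * a) := by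
  rw [le_div_iff₀ (by positivity)]
  have hsq : (2 * a * x + b) ^ 2 ≤ b ^ 2 + 4 * a * c := by nlinarith
  linarith [Real.le_sqrt_of_sq_le hsq]

theorem stmt3_general (n k : ℕ) (hn : 0 < n)
    (A : Matrix (Fin n) (Fin n) ℝ) (hsym : A.IsSymm)
    (hreg : ∀ i, ∑ j, A i j = k)
    (τ : ℝ)
    (hτmin : ∀ (μ : ℝ) (v : Fin n → ℝ), v ≠ 0 → A.mulVec v = μ • v → τ ≤ μ)
    (hkτ : τ < k)
    (S : Finset (Fin n)) (hind : ∀ i ∈ S, ∀ j ∈ S, i ≠ j → A i j = 0)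
    (s s₁ : ℕ) (hs : s = S.card)
    (hs₁ : (s₁ : ℝ) = ∑ i ∈ S, A i i) :
    (s : ℝ) ≤ n * (-τ + Real.sqrt (τ ^ 2 + 4 * s₁ * ((k : ℝ) - τ) / n))
      / (2 * ((k : ℝ) - τ)) := by
  set B := A - τ • (1 : Matrix (Fin n) (Fin n) ℝ)
  set u := (S : Set (Fin n)).indicator (1 : Fin n → ℝ)
  have hB1 : B *ᵥ 1 = ((k : ℝ) - τ) • 1 := by
    rw [sub_mulVec, smul_mulVec, one_mulVec, mulVec_one_of_forall_sum_eq hreg, sub_smul]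
  have hBu : u ⬝ᵥ B *ᵥ u = s₁ - τ * s := by
    rw [indicator_dotProduct_mulVec_indicator B fun i hi j hj hij => by
      simp [B, hind i hi j hj hij, hij]]
    simp [B, hs₁, hs, sum_sub_distrib, mul_comm]
  have key := (hsym.posSemidef_sub_smul_one hτmin).mul_sq_dotProduct_le hB1 u
  have hu1 : u ⬝ᵥ 1 = s := by rw [hs]; exact indicator_dotProduct_one S
  have h11 : (1 : Fin n → ℝ) ⬝ᵥ 1 = n := by simp [dotProduct_one]
  rw [hu1, h11, hBu] at key
  have hn' : (0 : ℝ) < n := by exact_mod_cast hn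
  calc (s : ℝ) ≤ (-τ + √(τ ^ 2 + 4 * ((k - τ) / n) * s₁)) / (2 * ((k - τ) / n)) := by
        refine le_quadratic_root_of_mul_sq_add_mul_le (div_pos (sub_pos.2 hkτ) hn') ?_
        rw [div_mul_eq_mul_div, div_add' _ _ _ hn'.ne', div_le_iff₀ hn']
        linarith
    _ = _ := by
        rw [show 4 * ((k - τ) / n) * (s₁ : ℝ) = 4 * s₁ * (k - τ) / n by ring]
        field_simp

/-- Ratio-type bound for `k`-regular graphs with loops: if `S` is an independent set of
size `s` containing `s₁` looped vertices then
`s ≤ n·(−τ + √(τ² + 4 s₁ (k−τ)/n)) / (2 (k−τ))`. -/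
theorem stmt3 (n k : ℕ) (hn : 0 < n)
    (A : Matrix (Fin n) (Fin n) ℝ) (hsym : A.IsSymm)
    (h01 : ∀ i j, A i j = 0 ∨ A i j = 1)
    (hreg : ∀ i, ∑ j, A i j = k)
    (τ : ℝ)
    (hτeig : ∃ v : Fin n → ℝ, v ≠ 0 ∧ A.mulVec v = τ • v)
    (hτmin : ∀ (μ : ℝ) (v : Fin n → ℝ), v ≠ 0 → A.mulVec v = μ • v → τ ≤ μ)
    (hkτ : τ < k)
    (S : Finset (Fin n)) (hind : ∀ i ∈ S, ∀ j ∈ S, i ≠ j → A i j = 0)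
    (s s₁ : ℕ) (hs : s = S.card)
    (hs₁ : (s₁ : ℝ) = ∑ i ∈ S, A i i) :
    (s : ℝ) ≤ n * (-τ + Real.sqrt (τ ^ 2 + 4 * s₁ * ((k : ℝ) - τ) / n))
      / (2 * ((k : ℝ) - τ)) :=
  stmt3_general n k hn A hsym hreg τ hτmin hkτ S hind s s₁ hs hs₁
end

section
/- Let X be a loopless graph on n vertices and let μ be the greatest eigenvalue of its Laplacian matrix L = D − A. For any independent set S of size s with average degree d̄_S = (1/s)·Σ_{i∈S} d_i, we have s ≤ n·(μ − d̄_S)/μ, provided μ > 0. -/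
/-!
Let `x = 𝟙_S - (s/n)·𝟙`. Since the rows of `L` sum to zero and `L` is symmetric, shifting by a
multiple of `𝟙` does not change the quadratic form, so `xᵀ L x = 𝟙_Sᵀ L 𝟙_S`, which for an
independent set is the degree sum `s · d̄_S`. On the other hand `xᵀ x = s (n - s) / n`, and the
Rayleigh bound `xᵀ L x ≤ μ xᵀ x` gives `d̄_S ≤ μ (n - s) / n`.
-/

open Matrix Finset

open scoped MatrixOrder in
theorem Matrix.IsHermitian.dotProduct_mulVec_le_of_eigenvalue_le {ι : Type*} [Fintype ι]
    [DecidableEq ι] {L : Matrix ι ι ℝ} (hL : L.IsHermitian) {μ : ℝ}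
    (hμ : ∀ (ν : ℝ) (v : ι → ℝ), v ≠ 0 → L *ᵥ v = ν • v → ν ≤ μ) (x : ι → ℝ) :
    x ⬝ᵥ L *ᵥ x ≤ μ * (x ⬝ᵥ x) := by
  have hle : L ≤ algebraMap ℝ _ μ := by
    rw [le_algebraMap_iff_spectrum_le hL.isSelfAdjoint, hL.spectrum_real_eq_range_eigenvalues]
    rintro _ ⟨i, rfl⟩
    exact hμ _ _ (hL.eigenvectorBasis.orthonormal.ne_zero i ∘ (WithLp.ofLp_eq_zero 2).mp)
      (hL.mulVec_eigenvectorBasis i)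
  simpa [Algebra.algebraMap_eq_smul_one, sub_mulVec, dotProduct_sub, smul_mulVec,
    dotProduct_smul] using (le_iff.mp hle).dotProduct_mulVec_nonneg x

theorem Matrix.IsSymm.dotProduct_mulVec_sub_smul_one {ι R : Type*} [Fintype ι] [CommRing R]
    {L : Matrix ι ι R} (hL : L.IsSymm) (hL1 : L *ᵥ 1 = 0) (x : ι → R) (t : R) :
    (x - t • 1) ⬝ᵥ L *ᵥ (x - t • 1) = x ⬝ᵥ L *ᵥ x := by
  have h1L : 1 ᵥ* L = 0 := by rw [← mulVec_transpose, hL.eq, hL1]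
  rw [mulVec_sub, mulVec_smul, hL1, smul_zero, sub_zero, sub_dotProduct, smul_dotProduct,
    dotProduct_mulVec 1, h1L, zero_dotProduct, smul_zero, sub_zero]

section Laplacian

variable {ι : Type*} [Fintype ι] [DecidableEq ι]

theorem diagonal_sum_sub_mulVec_one {R : Type*} [CommRing R] (A : Matrix ι ι R) :
    (diagonal (fun i => ∑ j, A i j) - A) *ᵥ 1 = 0 := by
  ext i
  simp [mulVec, dotProduct, diagonal_apply]

theorem indicator_dotProduct_diagonal_sub_mulVec_indicator {R : Type*} [CommRing R]
    (d : ι → R) {A : Matrix ι ι R} {S : Finset ι} (hS : ∀ i ∈ S, ∀ j ∈ S, A i j = 0) :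
    (fun i => if i ∈ S then 1 else 0) ⬝ᵥ (diagonal d - A) *ᵥ (fun i => if i ∈ S then 1 else 0)
      = ∑ i ∈ S, d i := by
  have hA : ∑ i ∈ S, ∑ j ∈ S, A i j = 0 := sum_eq_zero fun i hi => sum_eq_zero (hS i hi)
  simp [mulVec, dotProduct, mul_ite, sum_ite_mem, diagonal_apply, hA]

theorem indicator_sub_smul_one_dotProduct_self [Nonempty ι] (S : Finset ι) :
    let x : ι → ℝ := (fun i => if i ∈ S then 1 else 0) - (#S / Fintype.card ι : ℝ) • 1
    x ⬝ᵥ x = #S * (Fintype.card ι - #S) / Fintype.card ι := by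
  intro x
  set t : ℝ := #S / Fintype.card ι with ht
  have hx : ∀ i, x i * x i = (if i ∈ S then (1 - 2 * t : ℝ) else 0) + t ^ 2 := by
    intro i
    simp only [x, Pi.sub_apply, Pi.smul_apply, Pi.one_apply, smul_eq_mul, mul_one]
    split_ifs <;> ring
  simp only [dotProduct, hx, sum_add_distrib, sum_ite_mem, univ_inter, sum_const, card_univ,
    nsmul_eq_mul, ht]
  field_simp
  ring

theorem sum_rowSum_le_of_eigenvalue_le [Nonempty ι] {A : Matrix ι ι ℝ} (hA : A.IsSymm)
    {S : Finset ι} (hS : ∀ i ∈ S, ∀ j ∈ S, A i j = 0) {μ : ℝ}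
    (hμ : ∀ (ν : ℝ) (v : ι → ℝ), v ≠ 0 → (diagonal (fun i => ∑ j, A i j) - A) *ᵥ v = ν • v →
      ν ≤ μ) :
    ∑ i ∈ S, ∑ j, A i j ≤ μ * (#S * (Fintype.card ι - #S) / Fintype.card ι) := by
  have hL : (diagonal (fun i => ∑ j, A i j) - A).IsSymm := (isSymm_diagonal _).sub hA
  have := (isHermitian_iff_isSymm.mpr hL).dotProduct_mulVec_le_of_eigenvalue_le hμ
    ((fun i => if i ∈ S then 1 else 0) - (#S / Fintype.card ι : ℝ) • 1)
  rwa [hL.dotProduct_mulVec_sub_smul_one (diagonal_sum_sub_mulVec_one A),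
    indicator_dotProduct_diagonal_sub_mulVec_indicator _ hS,
    indicator_sub_smul_one_dotProduct_self] at this

end Laplacian

theorem stmt4_general (n : ℕ) (hn : 0 < n)
    (A : Matrix (Fin n) (Fin n) ℝ) (hsym : A.IsSymm)
    (hloop : ∀ i, A i i = 0)
    (L : Matrix (Fin n) (Fin n) ℝ)
    (hL : L = Matrix.diagonal (fun i => ∑ j, A i j) - A)
    (μ : ℝ) (hμpos : 0 < μ)
    (hμmax : ∀ (ν : ℝ) (v : Fin n → ℝ), v ≠ 0 → L.mulVec v = ν • v → ν ≤ μ)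
    (S : Finset (Fin n)) (hSne : S.Nonempty)
    (hind : ∀ i ∈ S, ∀ j ∈ S, i ≠ j → A i j = 0)
    (dbar : ℝ) (hdbar : dbar = (∑ i ∈ S, ∑ j, A i j) / S.card) :
    (S.card : ℝ) ≤ n * (μ - dbar) / μ := by
  have : Nonempty (Fin n) := ⟨⟨0, hn⟩⟩
  have hS : ∀ i ∈ S, ∀ j ∈ S, A i j = 0 := fun i hi j hj => by
    obtain rfl | hij := eq_or_ne i j
    exacts [hloop i, hind i hi j hj hij]
  have hsum := sum_rowSum_le_of_eigenvalue_le hsym hS (hL ▸ hμmax)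
  rw [Fintype.card_fin] at hsum
  have hs : (0 : ℝ) < #S := by exact_mod_cast hSne.card_pos
  have hdbar_le : dbar * n ≤ μ * (n - #S) := by
    rw [hdbar, div_mul_eq_mul_div, div_le_iff₀ hs]
    calc (∑ i ∈ S, ∑ j, A i j) * n ≤ μ * (#S * (n - #S) / n) * n := by gcongr
      _ = μ * (n - #S) * #S := by field_simp
  rw [le_div_iff₀ hμpos]
  linarith

/-- Laplacian bound: in a loopless graph with largest Laplacian eigenvalue `μ > 0`,
an independent set `S` of size `s` with average degree `d̄_S` satisfies
`s ≤ n (μ − d̄_S)/μ`. -/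
theorem stmt4 (n : ℕ) (hn : 0 < n)
    (A : Matrix (Fin n) (Fin n) ℝ) (hsym : A.IsSymm)
    (h01 : ∀ i j, A i j = 0 ∨ A i j = 1) (hloop : ∀ i, A i i = 0)
    (L : Matrix (Fin n) (Fin n) ℝ)
    (hL : L = Matrix.diagonal (fun i => ∑ j, A i j) - A)
    (μ : ℝ) (hμpos : 0 < μ)
    (hμeig : ∃ v : Fin n → ℝ, v ≠ 0 ∧ L.mulVec v = μ • v)
    (hμmax : ∀ (ν : ℝ) (v : Fin n → ℝ), v ≠ 0 → L.mulVec v = ν • v → ν ≤ μ)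
    (S : Finset (Fin n)) (hSne : S.Nonempty)
    (hind : ∀ i ∈ S, ∀ j ∈ S, i ≠ j → A i j = 0)
    (dbar : ℝ) (hdbar : dbar = (∑ i ∈ S, ∑ j, A i j) / S.card) :
    (S.card : ℝ) ≤ n * (μ - dbar) / μ :=
  stmt4_general n hn A hsym hloop L hL μ hμpos hμmax S hSne hind dbar hdbar
end

section
/- Let X be a loopless graph on n vertices with Laplacian L having greatest eigenvalue μ, and let S be an independent set of size s with characteristic vector z. If equality holds in the bound s = n·(μ − d̄_S)/μ, then L(z − (s/n)·1) = μ·(z − (s/n)·1); consequently every vertex in S has exactly μ(1 − s/n) neighbours outside S, and every vertex outside S has exactly μ·s/n neighbours in S. -/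
/-!
As `μ` bounds every eigenvalue of the symmetric matrix `L`, the matrix `μ • 1 - L` is positive
semidefinite, so any `w` with `w ⬝ᵥ L *ᵥ w = μ * (w ⬝ᵥ w)` is a `μ`-eigenvector. Since `L` kills
constants, `w = z - (s/n) • 1` has `w ⬝ᵥ L *ᵥ w = z ⬝ᵥ L *ᵥ z = e(S, Sᶜ)`, which is `s * d̄_S`
because `S` is independent, while `w ⬝ᵥ w = s * (1 - s/n)`; the equality `s = n(μ - d̄_S)/μ` says
exactly that their ratio is `μ`. Reading `L *ᵥ w = μ • w` at a vertex inside or outside `S` gives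
the two neighbour counts.
-/

open Matrix Finset

variable {ι : Type*} [Fintype ι] [DecidableEq ι]

namespace Matrix

theorem IsSymm.posSemidef_smul_one_sub {L : Matrix ι ι ℝ} (hL : L.IsSymm) {μ : ℝ}
    (hμ : ∀ (ν : ℝ) (v : ι → ℝ), v ≠ 0 → L *ᵥ v = ν • v → ν ≤ μ) :
    (μ • (1 : Matrix ι ι ℝ) - L).PosSemidef := by
  have hM : (μ • (1 : Matrix ι ι ℝ) - L).IsHermitian :=
    (isSymm_one.smul μ).sub hL
  refine hM.posSemidef_iff_eigenvalues_nonneg.mpr fun i => ?_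
  set v := (hM.eigenvectorBasis i).ofLp
  have hv : v ≠ 0 := fun h =>
    hM.eigenvectorBasis.orthonormal.ne_zero i (by ext j; exact congrFun h j)
  have hLv : L *ᵥ v = (μ - hM.eigenvalues i) • v := by
    have h := hM.mulVec_eigenvectorBasis i
    rw [sub_mulVec, smul_mulVec, one_mulVec] at h
    rw [sub_smul, ← h, sub_sub_cancel]
  simpa using hμ _ v hv hLv

theorem IsSymm.mulVec_eq_smul_of_dotProduct_mulVec_eq {L : Matrix ι ι ℝ} (hL : L.IsSymm) {μ : ℝ}
    (hμ : ∀ (ν : ℝ) (v : ι → ℝ), v ≠ 0 → L *ᵥ v = ν • v → ν ≤ μ) {w : ι → ℝ}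
    (hw : w ⬝ᵥ L *ᵥ w = μ * (w ⬝ᵥ w)) : L *ᵥ w = μ • w := by
  have hMw : (μ • (1 : Matrix ι ι ℝ) - L) *ᵥ w = 0 := by
    refine ((hL.posSemidef_smul_one_sub hμ).dotProduct_mulVec_zero_iff w).mp ?_
    rw [star_trivial, sub_mulVec, smul_mulVec, one_mulVec, dotProduct_sub, dotProduct_smul, hw,
      smul_eq_mul, sub_self]
  rw [sub_mulVec, smul_mulVec, one_mulVec, sub_eq_zero] at hMw
  exact hMw.symm

end Matrix

variable {R : Type*} [CommRing R]

def laplacian (A : Matrix ι ι R) : Matrix ι ι R :=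
  diagonal (fun i => ∑ j, A i j) - A

theorem laplacian_mulVec_apply (A : Matrix ι ι R) (x : ι → R) (i : ι) :
    (laplacian A *ᵥ x) i = ∑ j, A i j * (x i - x j) := by
  rw [laplacian, sub_mulVec, Pi.sub_apply, mulVec_diagonal]
  simp only [mulVec, dotProduct, mul_sub, sum_sub_distrib, sum_mul]

theorem laplacian_mulVec_const_one (A : Matrix ι ι R) : laplacian A *ᵥ (fun _ => 1) = 0 := by
  ext i
  simp [laplacian_mulVec_apply]

theorem laplacian_mulVec_sub_const (A : Matrix ι ι R) (x : ι → R) (c : R) :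
    laplacian A *ᵥ (x - c • fun _ => 1) = laplacian A *ᵥ x := by
  rw [mulVec_sub, mulVec_smul, laplacian_mulVec_const_one, smul_zero, sub_zero]

theorem isSymm_laplacian {A : Matrix ι ι R} (hA : A.IsSymm) : (laplacian A).IsSymm :=
  (isSymm_diagonal _).sub hA

theorem dotProduct_laplacian_mulVec_sub_const {A : Matrix ι ι R} (hA : A.IsSymm) (x : ι → R)
    (c : R) :
    (x - c • fun _ => 1) ⬝ᵥ laplacian A *ᵥ (x - c • fun _ => 1) = x ⬝ᵥ laplacian A *ᵥ x := by
  rw [laplacian_mulVec_sub_const, sub_dotProduct, smul_dotProduct, dotProduct_mulVec (fun _ => 1),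
    ← mulVec_transpose, isSymm_laplacian hA, laplacian_mulVec_const_one, zero_dotProduct,
    smul_zero, sub_zero]

def indicatorVec (S : Finset ι) : ι → R := fun i => if i ∈ S then 1 else 0

theorem laplacian_mulVec_indicatorVec_of_mem (A : Matrix ι ι R) {S : Finset ι} {i : ι}
    (hi : i ∈ S) : (laplacian A *ᵥ indicatorVec S) i = ∑ j ∈ Sᶜ, A i j := by
  rw [laplacian_mulVec_apply, ← sum_add_sum_compl S,
    sum_eq_zero fun j hj => by simp [indicatorVec, hi, hj], zero_add]
  exact sum_congr rfl fun j hj => by simp [indicatorVec, hi, mem_compl.mp hj]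

theorem laplacian_mulVec_indicatorVec_of_notMem (A : Matrix ι ι R) {S : Finset ι} {i : ι}
    (hi : i ∉ S) : (laplacian A *ᵥ indicatorVec S) i = -∑ j ∈ S, A i j := by
  simp only [laplacian_mulVec_apply, indicatorVec, hi, if_false, zero_sub, mul_neg,
    sum_neg_distrib, mul_ite, mul_one, mul_zero, sum_ite_mem, univ_inter]

theorem indicatorVec_dotProduct_laplacian_mulVec (A : Matrix ι ι R) (S : Finset ι) :
    indicatorVec S ⬝ᵥ laplacian A *ᵥ indicatorVec S = ∑ i ∈ S, ∑ j ∈ Sᶜ, A i j := by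
  simp only [dotProduct, indicatorVec, ite_mul, one_mul, zero_mul, sum_ite_mem, univ_inter]
  exact sum_congr rfl fun i hi => laplacian_mulVec_indicatorVec_of_mem A hi

theorem indicatorVec_sub_const_dotProduct_self (S : Finset ι) (c : R) :
    (indicatorVec S - c • fun _ => 1) ⬝ᵥ (indicatorVec S - c • fun _ => 1)
      = #S - 2 * c * #S + c ^ 2 * Fintype.card ι := by
  have hsq (i : ι) : (indicatorVec S i - c) * (indicatorVec S i - c)
      = indicatorVec S i - 2 * c * indicatorVec S i + c ^ 2 := by
    unfold indicatorVec; split_ifs <;> ring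
  have hsum : ∑ i, indicatorVec S i = (#S : R) := by simp [indicatorVec]
  simp only [dotProduct, Pi.sub_apply, Pi.smul_apply, smul_eq_mul, mul_one, hsq, sum_add_distrib,
    sum_sub_distrib, ← mul_sum, hsum, sum_const, card_univ, nsmul_eq_mul]
  ring

theorem sum_sum_compl_eq_sum_sum_of_eq_zero {A : Matrix ι ι R} {S : Finset ι}
    (hS : ∀ i ∈ S, ∀ j ∈ S, A i j = 0) : ∑ i ∈ S, ∑ j ∈ Sᶜ, A i j = ∑ i ∈ S, ∑ j, A i j :=
  sum_congr rfl fun i hi => by rw [← sum_add_sum_compl S, sum_eq_zero (hS i hi), zero_add]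

theorem stmt7_general (n : ℕ)
    (A : Matrix (Fin n) (Fin n) ℝ) (hsym : A.IsSymm)
    (hloop : ∀ i, A i i = 0)
    (L : Matrix (Fin n) (Fin n) ℝ)
    (hL : L = Matrix.diagonal (fun i => ∑ j, A i j) - A)
    (μ : ℝ)
    (hμmax : ∀ (ν : ℝ) (v : Fin n → ℝ), v ≠ 0 → L.mulVec v = ν • v → ν ≤ μ)
    (S : Finset (Fin n)) (hSne : S.Nonempty)
    (hind : ∀ i ∈ S, ∀ j ∈ S, i ≠ j → A i j = 0)
    (s : ℕ) (hs : s = S.card)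
    (dbar : ℝ) (hdbar : dbar = (∑ i ∈ S, ∑ j, A i j) / s)
    (z : Fin n → ℝ) (hz : z = fun i => if i ∈ S then 1 else 0)
    (heq : (s : ℝ) = n * (μ - dbar) / μ) :
    L.mulVec (z - ((s : ℝ) / n) • ((fun _ => 1) : Fin n → ℝ))
        = μ • (z - ((s : ℝ) / n) • ((fun _ => 1) : Fin n → ℝ))
      ∧ (∀ i ∈ S, ∑ j ∈ Sᶜ, A i j = μ * (1 - (s : ℝ) / n))
      ∧ (∀ i ∈ Sᶜ, ∑ j ∈ S, A i j = μ * ((s : ℝ) / n)) := by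
  obtain rfl : L = laplacian A := hL
  obtain rfl : z = indicatorVec S := hz
  subst hs
  have hs0 : (#S : ℝ) ≠ 0 := by exact_mod_cast hSne.card_pos.ne'
  have hn0 : (n : ℝ) ≠ 0 := by exact_mod_cast hSne.choose.pos.ne'
  -- for `μ = 0` the division by zero turns `heq` into `s = 0`
  have hμ : μ ≠ 0 := by rintro rfl; simp [hs0] at heq
  have hS : ∀ i ∈ S, ∀ j ∈ S, A i j = 0 := fun i hi j hj =>
    (eq_or_ne i j).elim (fun h => h ▸ hloop i) (hind i hi j hj)
  have hcut : ∑ i ∈ S, ∑ j ∈ Sᶜ, A i j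
      = μ * (#S - 2 * (#S / n) * #S + (#S / n) ^ 2 * n) := by
    rw [sum_sum_compl_eq_sum_sum_of_eq_zero hS, ← div_mul_cancel₀ (∑ i ∈ S, ∑ j, A i j) hs0,
      ← hdbar]
    field_simp at heq ⊢
    linear_combination heq
  have heig := (isSymm_laplacian hsym).mulVec_eq_smul_of_dotProduct_mulVec_eq hμmax
    (w := indicatorVec S - ((#S : ℝ) / n) • fun _ => 1) (by
      rw [dotProduct_laplacian_mulVec_sub_const hsym, indicatorVec_dotProduct_laplacian_mulVec,
        indicatorVec_sub_const_dotProduct_self, hcut, Fintype.card_fin])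
  refine ⟨heig, fun i hi => ?_, fun i hi => ?_⟩
  · have h := congrFun heig i
    rw [laplacian_mulVec_sub_const, laplacian_mulVec_indicatorVec_of_mem A hi] at h
    simpa [indicatorVec, hi] using h
  · rw [mem_compl] at hi
    have h := congrFun heig i
    rw [laplacian_mulVec_sub_const, laplacian_mulVec_indicatorVec_of_notMem A hi] at h
    simpa [indicatorVec, hi] using h

/-- Equality in the Laplacian bound: if `s = n(μ − d̄_S)/μ` then `z − (s/n)·1` is a
`μ`-eigenvector of `L`, vertices in `S` have exactly `μ(1 − s/n)` neighbours outside `S`,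
and vertices outside `S` have exactly `μ·s/n` neighbours in `S`. -/
theorem stmt7 (n : ℕ) (hn : 0 < n)
    (A : Matrix (Fin n) (Fin n) ℝ) (hsym : A.IsSymm)
    (h01 : ∀ i j, A i j = 0 ∨ A i j = 1) (hloop : ∀ i, A i i = 0)
    (L : Matrix (Fin n) (Fin n) ℝ)
    (hL : L = Matrix.diagonal (fun i => ∑ j, A i j) - A)
    (μ : ℝ) (hμpos : 0 < μ)
    (hμeig : ∃ v : Fin n → ℝ, v ≠ 0 ∧ L.mulVec v = μ • v)
    (hμmax : ∀ (ν : ℝ) (v : Fin n → ℝ), v ≠ 0 → L.mulVec v = ν • v → ν ≤ μ)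
    (S : Finset (Fin n)) (hSne : S.Nonempty)
    (hind : ∀ i ∈ S, ∀ j ∈ S, i ≠ j → A i j = 0)
    (s : ℕ) (hs : s = S.card)
    (dbar : ℝ) (hdbar : dbar = (∑ i ∈ S, ∑ j, A i j) / s)
    (z : Fin n → ℝ) (hz : z = fun i => if i ∈ S then 1 else 0)
    (heq : (s : ℝ) = n * (μ - dbar) / μ) :
    L.mulVec (z - ((s : ℝ) / n) • ((fun _ => 1) : Fin n → ℝ))
        = μ • (z - ((s : ℝ) / n) • ((fun _ => 1) : Fin n → ℝ))
      ∧ (∀ i ∈ S, ∑ j ∈ Sᶜ, A i j = μ * (1 - (s : ℝ) / n))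
      ∧ (∀ i ∈ Sᶜ, ∑ j ∈ S, A i j = μ * ((s : ℝ) / n)) :=
  stmt7_general n A hsym hloop L hL μ hμmax S hSne hind s hs dbar hdbar z hz heq
end

section
/- Let X be a loopless graph on n vertices, μ the greatest Laplacian eigenvalue, and S an independent set of size s attaining equality in s = n(μ − d̄_S)/μ. If gcd(s, n) = 1, then μ = n and every vertex of S is adjacent to every vertex of V∖S (the induced bipartite subgraph between S and its complement is complete bipartite). -/
open Matrix Finset

/-!
Since `μ` is the largest eigenvalue of the symmetric matrix `L`, the matrix `μ • 1 - L` is positive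
semidefinite, so any vector with Rayleigh quotient `μ` is an eigenvector for `μ`. The equality
`s = n (μ - d̄_S) / μ` says precisely that the cut vector `x = (n - s) 1_S - s 1_{V∖S}` has Rayleigh
quotient `μ`: its quadratic form is `n² e(S, V∖S) = n² s d̄_S` because `S` is independent. Reading
`L x = μ x` at a vertex of `S` and at a vertex outside `S` gives `n d = μ (n - s)` and `n a = μ s`
for integers `d` and `a ≤ s`. Hence `μ = a + d` is an integer with `n ∣ μ s`, so `n ∣ μ`, while
`μ ≤ n`; thus `μ = n` and `a = s`.
-/

section Rayleigh

variable {ι : Type*} [Fintype ι] [DecidableEq ι]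

theorem Matrix.IsSymm.posSemidef_smul_one_sub_s9 {M : Matrix ι ι ℝ} (hM : M.IsSymm) {μ : ℝ}
    (hμ : ∀ (ν : ℝ) (v : ι → ℝ), v ≠ 0 → M *ᵥ v = ν • v → ν ≤ μ) :
    (μ • (1 : Matrix ι ι ℝ) - M).PosSemidef := by
  have hH : (μ • (1 : Matrix ι ι ℝ) - M).IsHermitian :=
    isHermitian_iff_isSymm.mpr ((isSymm_one.smul μ).sub hM)
  refine hH.posSemidef_iff_eigenvalues_nonneg.mpr fun k => ?_
  set u : ι → ℝ := ⇑(hH.eigenvectorBasis k)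
  have hu : u ≠ 0 := fun h =>
    hH.eigenvectorBasis.orthonormal.ne_zero k (WithLp.ofLp_injective 2 h)
  have hMu : M *ᵥ u = (μ - hH.eigenvalues k) • u := by
    have h := hH.mulVec_eigenvectorBasis k
    rw [sub_mulVec, smul_mulVec, one_mulVec] at h
    rw [sub_smul, ← h, sub_sub_cancel]
  simpa using hμ _ u hu hMu

theorem Matrix.IsSymm.mulVec_eq_smul_of_dotProduct_eq {M : Matrix ι ι ℝ} (hM : M.IsSymm)
    {μ : ℝ} (hμ : ∀ (ν : ℝ) (v : ι → ℝ), v ≠ 0 → M *ᵥ v = ν • v → ν ≤ μ) {v : ι → ℝ}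
    (hv : v ⬝ᵥ (M *ᵥ v) = μ * (v ⬝ᵥ v)) : M *ᵥ v = μ • v := by
  have h := (hM.posSemidef_smul_one_sub_s9 hμ).dotProduct_mulVec_zero_iff v
  simp only [star_trivial, sub_mulVec, smul_mulVec, one_mulVec, dotProduct_sub, dotProduct_smul,
    smul_eq_mul, hv, sub_self, sub_eq_zero, true_iff] at h
  exact h.symm

end Rayleigh

namespace Matrix

variable {ι : Type*} [Fintype ι] [DecidableEq ι] (A : Matrix ι ι ℝ)

def laplacian : Matrix ι ι ℝ := diagonal (fun i => ∑ j, A i j) - A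

theorem laplacian_mulVec_apply (x : ι → ℝ) (i : ι) :
    (A.laplacian *ᵥ x) i = ∑ j, A i j * (x i - x j) := by
  rw [laplacian, sub_mulVec, Pi.sub_apply, mulVec_diagonal, mulVec, dotProduct, sum_mul,
    ← sum_sub_distrib]
  simp only [mul_sub]

theorem laplacian_mulVec_ite_of_mem {S : Finset ι} {i : ι} (hi : i ∈ S) (p q : ℝ) :
    (A.laplacian *ᵥ fun j => if j ∈ S then p else q) i = (p - q) * ∑ j ∈ Sᶜ, A i j := by
  rw [laplacian_mulVec_apply, ← sum_add_sum_compl S, mul_sum,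
    sum_eq_zero fun j hj => by simp [hi, hj], zero_add]
  exact sum_congr rfl fun j hj => by simp [hi, mem_compl.mp hj, mul_comm]

theorem laplacian_mulVec_ite_of_notMem {S : Finset ι} {i : ι} (hi : i ∉ S) (p q : ℝ) :
    (A.laplacian *ᵥ fun j => if j ∈ S then p else q) i = (q - p) * ∑ j ∈ S, A i j := by
  rw [laplacian_mulVec_apply, ← sum_add_sum_compl S, mul_sum,
    sum_eq_zero (s := Sᶜ) fun j hj => by simp [hi, mem_compl.mp hj], add_zero]
  exact sum_congr rfl fun j hj => by simp [hi, hj, mul_comm]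

variable {A}

theorem IsSymm.laplacian (hA : A.IsSymm) : A.laplacian.IsSymm := (isSymm_diagonal _).sub hA

theorem IsSymm.sum_laplacian_mulVec (hA : A.IsSymm) (x : ι → ℝ) :
    ∑ i, (A.laplacian *ᵥ x) i = 0 := by
  have h : ∑ i, ∑ j, A i j * x j = ∑ i, ∑ j, A i j * x i := by
    rw [sum_comm]; simp [hA.apply]
  simp [laplacian_mulVec_apply, mul_sub, sum_sub_distrib, h]

theorem IsSymm.dotProduct_laplacian_mulVec_ite (hA : A.IsSymm) (S : Finset ι) (p q : ℝ) :
    (fun i => if i ∈ S then p else q) ⬝ᵥ (A.laplacian *ᵥ fun i => if i ∈ S then p else q)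
      = (p - q) ^ 2 * ∑ i ∈ S, ∑ j ∈ Sᶜ, A i j := by
  set y := A.laplacian *ᵥ fun i => if i ∈ S then p else q
  have hsplit : ∑ i ∈ S, y i + ∑ i ∈ Sᶜ, y i = 0 := by
    rw [sum_add_sum_compl]; exact hA.sum_laplacian_mulVec _
  have hS : ∑ i ∈ S, y i = (p - q) * ∑ i ∈ S, ∑ j ∈ Sᶜ, A i j := by
    rw [mul_sum]; exact sum_congr rfl fun i hi => A.laplacian_mulVec_ite_of_mem hi p q
  calc _ = p * ∑ i ∈ S, y i + q * ∑ i ∈ Sᶜ, y i := by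
        rw [dotProduct, ← sum_add_sum_compl S, mul_sum, mul_sum]
        congr 1 <;> refine sum_congr rfl fun i hi => ?_
        · simp [hi]
        · simp [mem_compl.mp hi]
    _ = (p - q) * ∑ i ∈ S, y i := by linear_combination q * hsplit
    _ = _ := by rw [hS]; ring

variable {S : Finset ι} {μ : ℝ}

theorem IsSymm.card_mul_sum_eq_of_rayleigh_eq (hA : A.IsSymm) (hS : ∀ i ∈ S, ∀ j ∈ S, A i j = 0)
    (hμ : ∀ (ν : ℝ) (v : ι → ℝ), v ≠ 0 → A.laplacian *ᵥ v = ν • v → ν ≤ μ)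
    (heq : (Fintype.card ι : ℝ) * ∑ i ∈ S, ∑ j, A i j = μ * #S * (Fintype.card ι - #S)) :
    (∀ i ∈ S, (Fintype.card ι : ℝ) * ∑ j ∈ Sᶜ, A i j = μ * (Fintype.card ι - #S)) ∧
      ∀ j ∉ S, (Fintype.card ι : ℝ) * ∑ k ∈ S, A j k = μ * #S := by
  set n : ℝ := (Fintype.card ι : ℝ)
  set x : ι → ℝ := fun i => if i ∈ S then n - #S else -#S
  have hrow : ∀ i ∈ S, ∑ j ∈ Sᶜ, A i j = ∑ j, A i j := fun i hi => by
    rw [← sum_add_sum_compl S, sum_eq_zero (hS i hi), zero_add]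
  have hxx : x ⬝ᵥ x = #S * (n - #S) * n := by
    have hc : (#Sᶜ : ℝ) = n - #S := by rw [card_compl, Nat.cast_sub (card_le_univ S)]
    rw [dotProduct, ← sum_add_sum_compl S,
      sum_congr rfl fun i hi => show x i * x i = (n - #S) ^ 2 by simp [x, hi, sq],
      sum_congr rfl fun i hi => show x i * x i = (#S : ℝ) ^ 2 by simp [x, mem_compl.mp hi, sq]]
    simp only [sum_const, nsmul_eq_mul, hc]
    ring
  have hx : A.laplacian *ᵥ x = μ • x := by
    refine hA.laplacian.mulVec_eq_smul_of_dotProduct_eq hμ ?_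
    rw [hA.dotProduct_laplacian_mulVec_ite, sum_congr rfl hrow, hxx]
    linear_combination n * heq
  constructor
  · intro i hi
    have h := congrFun hx i
    rw [laplacian_mulVec_ite_of_mem _ hi] at h
    simpa [x, hi] using h
  · intro j hj
    have h := congrFun hx j
    rw [laplacian_mulVec_ite_of_notMem _ hj] at h
    simp only [x, hj, if_false, Pi.smul_apply, smul_eq_mul] at h
    linarith

theorem compl_nonempty_of_laplacian_mulVec_eq_smul (hS : ∀ i ∈ S, ∀ j ∈ S, A i j = 0)
    (hμ : μ ≠ 0) (heig : ∃ v : ι → ℝ, v ≠ 0 ∧ A.laplacian *ᵥ v = μ • v) : Sᶜ.Nonempty := by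
  rw [nonempty_iff_ne_empty, Ne, compl_eq_empty_iff]
  rintro rfl
  obtain ⟨v, hv0, hv⟩ := heig
  obtain rfl : A = 0 := by ext i j; exact hS i (mem_univ i) j (mem_univ j)
  simp only [laplacian, zero_apply, sum_const_zero, diagonal_zero, sub_zero, zero_mulVec] at hv
  exact hv0 ((smul_eq_zero.mp hv.symm).resolve_left hμ)

end Matrix

theorem Finset.exists_sum_eq_natCast_of_zero_or_one {ι : Type*} (s : Finset ι) {f : ι → ℝ}
    (hf : ∀ i, f i = 0 ∨ f i = 1) : ∃ m ≤ #s, ∑ i ∈ s, f i = m := by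
  classical
  refine ⟨#(s.filter (f · = 1)), card_filter_le _ _, ?_⟩
  rw [natCast_card_filter]
  exact sum_congr rfl fun i _ => by rcases hf i with h | h <;> simp [h]

theorem Finset.eq_one_of_sum_eq_card {ι : Type*} {s : Finset ι} {f : ι → ℝ}
    (hf : ∀ i, f i = 0 ∨ f i = 1) (hsum : ∑ i ∈ s, f i = #s) : ∀ i ∈ s, f i = 1 := by
  refine (sum_eq_sum_iff_of_le fun i _ => ?_).mp (by simpa using hsum)
  rcases hf i with h | h <;> simp [h]

theorem eq_natCast_of_coprime {n s a d : ℕ} {μ : ℝ} (hs : 0 < s) (hμ : 0 < μ) (has : a ≤ s)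
    (ha : (n : ℝ) * a = μ * s) (hd : (n : ℝ) * d = μ * (n - s)) (hcop : s.Coprime n) :
    μ = n := by
  have hn : (n : ℝ) ≠ 0 := fun h => by
    rw [h, zero_mul] at ha
    exact (mul_pos hμ (Nat.cast_pos.mpr hs)).ne ha
  have hμad : μ = (a + d : ℕ) := by
    push_cast
    exact mul_left_cancel₀ hn (by linear_combination -ha - hd)
  have hle : a + d ≤ n := by
    have : μ * s ≤ n * s := by rw [← ha]; gcongr
    exact_mod_cast hμad ▸ le_of_mul_le_mul_right this (by exact_mod_cast hs)
  have hdvd : n ∣ (a + d) * s := ⟨a, by exact_mod_cast (hμad ▸ ha).symm⟩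
  have hpos : 0 < a + d := by exact_mod_cast hμad ▸ hμ
  rw [hμad, le_antisymm hle (Nat.le_of_dvd hpos (hcop.symm.dvd_of_dvd_mul_right hdvd))]

theorem stmt9_general (n : ℕ)
    (A : Matrix (Fin n) (Fin n) ℝ) (hsym : A.IsSymm)
    (h01 : ∀ i j, A i j = 0 ∨ A i j = 1) (hloop : ∀ i, A i i = 0)
    (L : Matrix (Fin n) (Fin n) ℝ)
    (hL : L = Matrix.diagonal (fun i => ∑ j, A i j) - A)
    (μ : ℝ) (hμpos : 0 < μ)
    (hμeig : ∃ v : Fin n → ℝ, v ≠ 0 ∧ L.mulVec v = μ • v)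
    (hμmax : ∀ (ν : ℝ) (v : Fin n → ℝ), v ≠ 0 → L.mulVec v = ν • v → ν ≤ μ)
    (S : Finset (Fin n)) (hSne : S.Nonempty)
    (hind : ∀ i ∈ S, ∀ j ∈ S, i ≠ j → A i j = 0)
    (s : ℕ) (hs : s = S.card)
    (dbar : ℝ) (hdbar : dbar = (∑ i ∈ S, ∑ j, A i j) / s)
    (heq : (s : ℝ) = n * (μ - dbar) / μ)
    (hgcd : Nat.gcd s n = 1) :
    μ = n ∧ ∀ i ∈ S, ∀ j ∈ Sᶜ, A i j = 1 := by
  change L = A.laplacian at hL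
  subst hL hs
  have hS : ∀ i ∈ S, ∀ j ∈ S, A i j = 0 := fun i hi j hj => by
    rcases eq_or_ne i j with rfl | hij
    exacts [hloop i, hind i hi j hj hij]
  obtain ⟨j₀, hj₀⟩ := compl_nonempty_of_laplacian_mulVec_eq_smul hS hμpos.ne' hμeig
  have hSpos := hSne.card_pos
  obtain ⟨i₀, hi₀⟩ := hSne
  obtain ⟨hd, ha⟩ := hsym.card_mul_sum_eq_of_rayleigh_eq hS hμmax (by
    have hE : ∑ i ∈ S, ∑ j, A i j = #S * dbar := by rw [hdbar]; field_simp
    rw [eq_div_iff hμpos.ne'] at heq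
    rw [Fintype.card_fin, hE]
    linear_combination (#S : ℝ) * heq)
  simp only [Fintype.card_fin] at hd ha
  obtain ⟨a, has, hae⟩ := exists_sum_eq_natCast_of_zero_or_one S (h01 j₀)
  obtain ⟨d, -, hde⟩ := exists_sum_eq_natCast_of_zero_or_one Sᶜ (h01 i₀)
  have hμn : μ = n := eq_natCast_of_coprime hSpos hμpos has (hae ▸ ha j₀ (mem_compl.mp hj₀))
    (hde ▸ hd i₀ hi₀) hgcd
  refine ⟨hμn, fun i hi j hj => ?_⟩
  have h := ha j (mem_compl.mp hj)
  rw [hμn] at h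
  rw [← hsym.apply i j]
  exact eq_one_of_sum_eq_card (h01 j) (mul_left_cancel₀ (hμn ▸ hμpos.ne') h) i hi

/-- Equality in the Laplacian bound with `gcd(s,n) = 1` forces `μ = n` and the bipartite
subgraph between `S` and its complement to be complete bipartite. -/
theorem stmt9 (n : ℕ) (hn : 0 < n)
    (A : Matrix (Fin n) (Fin n) ℝ) (hsym : A.IsSymm)
    (h01 : ∀ i j, A i j = 0 ∨ A i j = 1) (hloop : ∀ i, A i i = 0)
    (L : Matrix (Fin n) (Fin n) ℝ)
    (hL : L = Matrix.diagonal (fun i => ∑ j, A i j) - A)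
    (μ : ℝ) (hμpos : 0 < μ)
    (hμeig : ∃ v : Fin n → ℝ, v ≠ 0 ∧ L.mulVec v = μ • v)
    (hμmax : ∀ (ν : ℝ) (v : Fin n → ℝ), v ≠ 0 → L.mulVec v = ν • v → ν ≤ μ)
    (S : Finset (Fin n)) (hSne : S.Nonempty)
    (hind : ∀ i ∈ S, ∀ j ∈ S, i ≠ j → A i j = 0)
    (s : ℕ) (hs : s = S.card)
    (dbar : ℝ) (hdbar : dbar = (∑ i ∈ S, ∑ j, A i j) / s)
    (heq : (s : ℝ) = n * (μ - dbar) / μ)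
    (hgcd : Nat.gcd s n = 1) :
    μ = n ∧ ∀ i ∈ S, ∀ j ∈ Sᶜ, A i j = 1 :=
  stmt9_general n A hsym h01 hloop L hL μ hμpos hμeig hμmax S hSne hind s hs dbar hdbar heq hgcd
end

section
/- Let X be a graph on n vertices with an independent set S of size s, and let B be a symmetric n×n matrix indexed by vertices such that: B is positive semidefinite, B_{ij} ≤ 0 whenever i ≠ j and i is not adjacent to j, B has constant row sum r > 0, and B has constant diagonal t. Then s ≤ n·t/r. -/
open Matrix Finset

/-!
Let `x` be the indicator vector of `S`, `s = #S`. Positive semidefiniteness applied to `x` minus its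
mean, together with the constant row sums, gives `r s² ≤ n · xᵀ B x`. On the other hand
`xᵀ B x = ∑_{i,j ∈ S} B i j ≤ s t`, because off the diagonal `S` meets only non-edges, where
`B ≤ 0`. Hence `r s² ≤ n s t`, and `s ≤ n t / r` follows (for `s = 0` from `n t = tr B ≥ 0`).
-/

lemma sum_sum_le_card_mul {ι : Type*} [DecidableEq ι] {B : Matrix ι ι ℝ} {S : Finset ι} {t : ℝ}
    (hdiag : ∀ i ∈ S, B i i = t) (hoff : ∀ i ∈ S, ∀ j ∈ S, i ≠ j → B i j ≤ 0) :
    ∑ i ∈ S, ∑ j ∈ S, B i j ≤ #S * t := by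
  rw [← nsmul_eq_mul, ← sum_const]
  refine sum_le_sum fun i hi => ?_
  rw [← add_sum_erase S _ hi, hdiag i hi, add_le_iff_nonpos_right]
  exact sum_nonpos fun j hj => hoff i hi j (mem_of_mem_erase hj) (ne_of_mem_erase hj).symm

variable {ι : Type*} [Fintype ι]

lemma mulVec_one_eq_smul_of_rowSum {B : Matrix ι ι ℝ} {r : ℝ} (hrow : ∀ i, ∑ j, B i j = r) :
    B *ᵥ 1 = r • 1 := by
  ext i
  simp [mulVec, dotProduct, hrow]

lemma dotProduct_mulVec_indicator [DecidableEq ι] (B : Matrix ι ι ℝ) (S : Finset ι) :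
    (fun i => if i ∈ S then (1 : ℝ) else 0) ⬝ᵥ B *ᵥ (fun i => if i ∈ S then 1 else 0) =
      ∑ i ∈ S, ∑ j ∈ S, B i j := by
  simp [dotProduct, mulVec]

lemma Matrix.PosSemidef.mul_sq_sum_le {B : Matrix ι ι ℝ} (hB : B.PosSemidef) {r : ℝ}
    (hrow : ∀ i, ∑ j, B i j = r) (x : ι → ℝ) :
    r * (∑ i, x i) ^ 2 ≤ Fintype.card ι * (x ⬝ᵥ B *ᵥ x) := by
  rcases isEmpty_or_nonempty ι with hι | hι
  · simp
  have hB1 : B *ᵥ 1 = r • 1 := mulVec_one_eq_smul_of_rowSum hrow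
  have h1B : 1 ᵥ* B = r • 1 := by
    rw [← mulVec_transpose, ← conjTranspose_eq_transpose_of_trivial, hB.isHermitian.eq, hB1]
  -- `x` minus its mean, scaled by `card ι` to avoid division
  have hy := hB.dotProduct_mulVec_nonneg ((Fintype.card ι : ℝ) • x - (∑ i, x i) • 1)
  simp only [star_trivial, mulVec_sub, mulVec_smul, sub_dotProduct, dotProduct_sub, smul_dotProduct,
    dotProduct_smul, hB1, dotProduct_mulVec 1, h1B, smul_eq_mul, one_dotProduct, dotProduct_one,
    Pi.sub_apply, Pi.smul_apply, Pi.one_apply, mul_one, sum_sub_distrib, ← mul_sum, sum_const,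
    card_univ, nsmul_eq_mul] at hy
  have hn : (0 : ℝ) < Fintype.card ι := by exact_mod_cast Fintype.card_pos
  nlinarith

lemma Matrix.PosSemidef.card_le_of_rowSum_of_diag [DecidableEq ι] {B : Matrix ι ι ℝ}
    (hB : B.PosSemidef) {r t : ℝ} (hr : 0 < r) (hrow : ∀ i, ∑ j, B i j = r)
    (hdiag : ∀ i, B i i = t) {S : Finset ι} (hoff : ∀ i ∈ S, ∀ j ∈ S, i ≠ j → B i j ≤ 0) :
    (#S : ℝ) ≤ Fintype.card ι * t / r := by
  have hquad := hB.mul_sq_sum_le hrow fun i => if i ∈ S then 1 else 0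
  rw [dotProduct_mulVec_indicator, sum_boole, filter_mem_eq_inter, univ_inter] at hquad
  have hS := sum_sum_le_card_mul (fun i _ => hdiag i) hoff
  have htrace : 0 ≤ Fintype.card ι * t := by simpa [trace, hdiag] using hB.trace_nonneg
  have hsq : (#S : ℝ) * (#S * r) ≤ #S * (Fintype.card ι * t) :=
    calc (#S : ℝ) * (#S * r) = r * #S ^ 2 := by ring
      _ ≤ Fintype.card ι * ∑ i ∈ S, ∑ j ∈ S, B i j := hquad
      _ ≤ Fintype.card ι * (#S * t) := by gcongr
      _ = #S * (Fintype.card ι * t) := by ring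
  rw [le_div_iff₀ hr]
  rcases (#S).eq_zero_or_pos with hS0 | hSpos
  · simpa [hS0] using htrace
  · exact le_of_mul_le_mul_left hsq (by exact_mod_cast hSpos)

theorem stmt12_general (n : ℕ)
    (A : Matrix (Fin n) (Fin n) ℝ)
    (S : Finset (Fin n)) (hind : ∀ i ∈ S, ∀ j ∈ S, i ≠ j → A i j = 0)
    (B : Matrix (Fin n) (Fin n) ℝ) (hBpsd : B.PosSemidef)
    (hBoff : ∀ i j, i ≠ j → A i j = 0 → B i j ≤ 0)
    (r t : ℝ) (hr : 0 < r)
    (hrow : ∀ i, ∑ j, B i j = r)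
    (hdiag : ∀ i, B i i = t) :
    (S.card : ℝ) ≤ n * t / r := by
  simpa using hBpsd.card_le_of_rowSum_of_diag hr hrow hdiag
    fun i hi j hj hij => hBoff i j hij (hind i hi j hj hij)

/-- Generalized LP bound: if `B ⪰ 0` is symmetric with `B_{ij} ≤ 0` on non-adjacent
pairs `i ≠ j`, constant row sum `r > 0` and constant diagonal `t`, then any independent
set satisfies `s ≤ n·t/r`. -/
theorem stmt12 (n : ℕ) (hn : 0 < n)
    (A : Matrix (Fin n) (Fin n) ℝ) (hsym : A.IsSymm)
    (h01 : ∀ i j, A i j = 0 ∨ A i j = 1)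
    (S : Finset (Fin n)) (hind : ∀ i ∈ S, ∀ j ∈ S, i ≠ j → A i j = 0)
    (B : Matrix (Fin n) (Fin n) ℝ) (hBpsd : B.PosSemidef)
    (hBoff : ∀ i j, i ≠ j → A i j = 0 → B i j ≤ 0)
    (r t : ℝ) (hr : 0 < r)
    (hrow : ∀ i, ∑ j, B i j = r)
    (hdiag : ∀ i, B i i = t) :
    (S.card : ℝ) ≤ n * t / r :=
  stmt12_general n A S hind B hBpsd hBoff r t hr hrow hdiag
end

section
/- Let X be the Erdős–Rényi polarity graph of order q with loops retained: X has n = q²+q+1 vertices, is (q+1)-regular, has q+1 looped vertices, and its adjacency eigenvalues are q+1 and ±sqrt(q). Then every independent set S satisfies |S| ≤ (sqrt(q) + sqrt(q + 4(q+1)(q+sqrt(q)+1)/(q²+q+1))) / (2(q+sqrt(q)+1)/(q²+q+1)). -/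
/-!
Since every eigenvalue of `A` is at least `-√q`, the matrix `A + √q • 1` is positive
semidefinite. Evaluating its quadratic form at the centred indicator `n • 1_S - |S| • 1` of an
independent set `S`, only the loops inside `S` survive from `1_Sᵀ A 1_S`, and regularity turns the
remaining terms into `(q + 1 + √q) |S|² ≤ (√q |S| + q + 1) n`. Solving this quadratic inequality
for `|S|` gives the bound.
-/

open Matrix Finset

namespace Matrix

variable {ι : Type*} [Fintype ι] [DecidableEq ι]

theorem IsHermitian.posSemidef_add_smul_one {A : Matrix ι ι ℝ} (hA : A.IsHermitian) {θ : ℝ}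
    (h : ∀ (μ : ℝ) (v : ι → ℝ), v ≠ 0 → A *ᵥ v = μ • v → -θ ≤ μ) :
    (A + θ • (1 : Matrix ι ι ℝ)).PosSemidef := by
  have hB : (A + θ • (1 : Matrix ι ι ℝ)).IsHermitian :=
    hA.add (isHermitian_one.smul (IsSelfAdjoint.all θ))
  refine hB.posSemidef_iff_eigenvalues_nonneg.mpr fun i => ?_
  set v : ι → ℝ := WithLp.ofLp (hB.eigenvectorBasis i)
  have hv : v ≠ 0 := fun h0 =>
    hB.eigenvectorBasis.orthonormal.ne_zero i (by simp [v, ← WithLp.ofLp_eq_zero, h0])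
  have hAv : A *ᵥ v = (hB.eigenvalues i - θ) • v := by
    have := hB.mulVec_eigenvectorBasis i
    rw [add_mulVec, smul_mulVec, one_mulVec] at this
    rw [sub_smul, ← this, add_sub_cancel_right]
  have := h _ _ hv hAv
  show (0 : ℝ) ≤ hB.eigenvalues i
  linarith

theorem IsSymm.ratio_bound_with_loops {A : Matrix ι ι ℝ} (hA : A.IsSymm) {d θ : ℝ}
    (hreg : ∀ i, ∑ j, A i j = d) (hpsd : (A + θ • (1 : Matrix ι ι ℝ)).PosSemidef)
    {S : Finset ι} (hS : ∀ i ∈ S, ∀ j ∈ S, i ≠ j → A i j = 0) :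
    (d + θ) * #S ^ 2 ≤ (θ * #S + ∑ i ∈ S, A i i) * Fintype.card ι := by
  set n : ℝ := (Fintype.card ι : ℝ)
  set k : ℝ := (#S : ℝ)
  set x : ι → ℝ := fun i => if i ∈ S then 1 else 0
  have hx : ∀ v : ι → ℝ, x ⬝ᵥ v = ∑ i ∈ S, v i := fun v => by
    simp [x, dotProduct, sum_ite_mem]
  have hA1 : A *ᵥ 1 = d • 1 := by
    ext i; simp [mulVec, dotProduct, hreg]
  have hxAx : x ⬝ᵥ A *ᵥ x = ∑ i ∈ S, A i i := by
    refine (hx _).trans (sum_congr rfl fun i hi => ?_)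
    rw [mulVec, dotProduct_comm, hx]
    exact sum_eq_single i (fun j hj hji => hS i hi j hj hji.symm) (absurd hi)
  have h1Ax : 1 ⬝ᵥ A *ᵥ x = d * k := by
    rw [dotProduct_mulVec, ← hA.eq, vecMul_transpose, hA1, smul_dotProduct, dotProduct_comm,
      hx]
    simp [k]
  have hxx : x ⬝ᵥ x = k := by simp [hx, x, k]
  have hx1 : x ⬝ᵥ 1 = k := by simp [hx, k]
  have h11 : (1 : ι → ℝ) ⬝ᵥ 1 = n := by simp [n]
  have key := hpsd.dotProduct_mulVec_nonneg (n • x - k • 1)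
  simp only [star_trivial, add_mulVec, smul_mulVec, one_mulVec, mulVec_sub, mulVec_smul, hA1,
    dotProduct_add, dotProduct_sub, sub_dotProduct, dotProduct_smul, smul_dotProduct,
    hxAx, h1Ax, hxx, hx1, dotProduct_comm 1 x, h11, smul_eq_mul] at key
  have hfac : 0 ≤ n * ((θ * k + ∑ i ∈ S, A i i) * n - (d + θ) * k ^ 2) :=
    key.trans_eq (by ring)
  obtain hn | hn : n = 0 ∨ 0 < n := (Nat.cast_nonneg (Fintype.card ι)).eq_or_lt'
  · have hkn : k ≤ n := Nat.cast_le.mpr (card_le_univ S)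
    have hk : k = 0 := by linarith [(Nat.cast_nonneg #S : (0 : ℝ) ≤ k)]
    rw [hn, hk]
    simp
  · exact sub_nonneg.mp ((mul_nonneg_iff_of_pos_left hn).mp hfac)

end Matrix

theorem le_div_of_mul_sq_sub_mul_le {a b c k : ℝ} (ha : 0 < a) (h : a * k ^ 2 - b * k ≤ c) :
    k ≤ (b + √(b ^ 2 + 4 * a * c)) / (2 * a) := by
  rw [le_div_iff₀ (by positivity)]
  have : 2 * a * k - b ≤ √(b ^ 2 + 4 * a * c) :=
    (le_abs_self _).trans (Real.abs_le_sqrt (by nlinarith))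
  linarith

theorem stmt14_general (q : ℕ) (n : ℕ) (hn : n = q ^ 2 + q + 1)
    (A : Matrix (Fin n) (Fin n) ℝ) (hsym : A.IsSymm)
    (h01 : ∀ i j, A i j = 0 ∨ A i j = 1)
    (hreg : ∀ i, ∑ j, A i j = (q : ℝ) + 1)
    (hloops : (∑ i, A i i) = (q : ℝ) + 1)
    (heig : ∀ (μ : ℝ) (v : Fin n → ℝ), v ≠ 0 → A.mulVec v = μ • v →
      μ = (q : ℝ) + 1 ∨ μ = Real.sqrt q ∨ μ = -Real.sqrt q)
    (S : Finset (Fin n)) (hind : ∀ i ∈ S, ∀ j ∈ S, i ≠ j → A i j = 0) :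
    (S.card : ℝ) ≤
      (Real.sqrt q + Real.sqrt ((q : ℝ) + 4 * ((q : ℝ) + 1)
          * ((q : ℝ) + Real.sqrt q + 1) / ((q : ℝ) ^ 2 + q + 1)))
        / (2 * ((q : ℝ) + Real.sqrt q + 1) / ((q : ℝ) ^ 2 + q + 1)) := by
  set s := √(q : ℝ)
  have hs : 0 ≤ s := Real.sqrt_nonneg _
  have hN : (Fintype.card (Fin n) : ℝ) = (q : ℝ) ^ 2 + q + 1 := by simp [hn]
  have hpsd : (A + s • (1 : Matrix (Fin n) (Fin n) ℝ)).PosSemidef :=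
    (isHermitian_iff_isSymm.mpr hsym).posSemidef_add_smul_one fun μ v hv hAv => by
      rcases heig μ v hv hAv with rfl | rfl | rfl <;> linarith [(q.cast_nonneg : (0 : ℝ) ≤ q)]
  have hloopsS : ∑ i ∈ S, A i i ≤ (q : ℝ) + 1 :=
    hloops ▸ sum_le_univ_sum_of_nonneg fun i => by rcases h01 i i with h | h <;> simp [h]
  have hratio := hsym.ratio_bound_with_loops hreg hpsd hind
  rw [hN] at hratio
  have hkey : ((q : ℝ) + s + 1) / ((q : ℝ) ^ 2 + q + 1) * (#S : ℝ) ^ 2 - s * #S ≤ (q : ℝ) + 1 := by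
    have hloopsN := mul_le_mul_of_nonneg_right (add_le_add_left hloopsS (s * #S))
      (by positivity : (0 : ℝ) ≤ (q : ℝ) ^ 2 + q + 1)
    rw [div_mul_eq_mul_div, sub_le_iff_le_add, div_le_iff₀ (by positivity)]
    linarith
  convert le_div_of_mul_sq_sub_mul_le (by positivity) hkey using 4
  · rw [Real.sq_sqrt q.cast_nonneg]
    ring
  · exact mul_div_assoc _ _ _

/-- Bound for the Erdős–Rényi polarity graph `ER(q)` with loops retained:
`n = q²+q+1` vertices, `(q+1)`-regular, `q+1` looped vertices, adjacency eigenvalues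
`q+1` and `±√q`; every independent set `S` satisfies the stated bound. -/
theorem stmt14 (q : ℕ) (hq : 2 ≤ q) (n : ℕ) (hn : n = q ^ 2 + q + 1)
    (A : Matrix (Fin n) (Fin n) ℝ) (hsym : A.IsSymm)
    (h01 : ∀ i j, A i j = 0 ∨ A i j = 1)
    (hreg : ∀ i, ∑ j, A i j = (q : ℝ) + 1)
    (hloops : (∑ i, A i i) = (q : ℝ) + 1)
    (heig : ∀ (μ : ℝ) (v : Fin n → ℝ), v ≠ 0 → A.mulVec v = μ • v →
      μ = (q : ℝ) + 1 ∨ μ = Real.sqrt q ∨ μ = -Real.sqrt q)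
    (S : Finset (Fin n)) (hind : ∀ i ∈ S, ∀ j ∈ S, i ≠ j → A i j = 0) :
    (S.card : ℝ) ≤
      (Real.sqrt q + Real.sqrt ((q : ℝ) + 4 * ((q : ℝ) + 1)
          * ((q : ℝ) + Real.sqrt q + 1) / ((q : ℝ) ^ 2 + q + 1)))
        / (2 * ((q : ℝ) + Real.sqrt q + 1) / ((q : ℝ) ^ 2 + q + 1)) :=
  stmt14_general q n hn A hsym h01 hreg hloops heig S hind
end

section
/- Let X be a k-regular loopless graph on n vertices with least adjacency eigenvalue τ, and suppose an independent set S attains the Delsarte–Hoffman bound |S| = n·(−τ)/(k−τ). Then the characteristic vector z of S is a linear combination of the all-ones vector (a k-eigenvector) and a τ-eigenvector of A. -/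
/-!
Since `τ` is the least eigenvalue, `A - τI` is positive semidefinite. Centre the characteristic
vector `z` of `S` at its mean, `w = z - (s/n)𝟙`. Regularity makes `𝟙` an eigenvector of `A - τI`,
so `wᵀ(A - τI)w = zᵀ(A - τI)z - (k - τ)s²/n = -τs - (k - τ)s²/n`, and independence of `S` is what
kills `zᵀAz`. This vanishes exactly when `s` attains the Hoffman bound, and a PSD quadratic form
vanishes only on the kernel, so `Aw = τw`. Finally `w ≠ 0`: otherwise `S` is every vertex, so
`A = 0`, which has no eigenvalue `τ < 0`.
-/

open Matrix Finset

namespace Matrix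

open scoped ComplexOrder

variable {ι 𝕜 : Type*} [Fintype ι] [RCLike 𝕜]

theorem IsHermitian.posSemidef_of_forall_eigenvalue_nonneg [DecidableEq ι] {M : Matrix ι ι 𝕜}
    (hM : M.IsHermitian) (h : ∀ (μ : ℝ) (v : ι → 𝕜), v ≠ 0 → M *ᵥ v = μ • v → 0 ≤ μ) :
    M.PosSemidef :=
  hM.posSemidef_iff_eigenvalues_nonneg.mpr fun i =>
    h _ _ ((WithLp.ofLp_eq_zero 2).ne.2 <| hM.eigenvectorBasis.orthonormal.ne_zero i)
      (hM.mulVec_eigenvectorBasis i)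

theorem posSemidef_sub_smul_one_of_forall_le_eigenvalue [DecidableEq ι] {A : Matrix ι ι ℝ}
    (hA : A.IsSymm) {τ : ℝ} (hτ : ∀ (μ : ℝ) (v : ι → ℝ), v ≠ 0 → A *ᵥ v = μ • v → τ ≤ μ) :
    (A - τ • 1).PosSemidef := by
  have hM : (A - τ • 1).IsHermitian := by
    simpa [isHermitian_iff_isSymm] using hA.sub (isSymm_one.smul τ)
  refine hM.posSemidef_of_forall_eigenvalue_nonneg fun μ v hv hMv => ?_
  have hAv : A *ᵥ v = (μ + τ) • v := by
    rw [sub_mulVec, smul_mulVec, one_mulVec, sub_eq_iff_eq_add] at hMv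
    rw [hMv, add_smul]
  linarith [hτ _ v hv hAv]

theorem mulVec_eq_smul_of_dotProduct_sub_smul_one_mulVec_eq_zero [DecidableEq ι]
    {A : Matrix ι ι ℝ} (hA : A.IsSymm) {τ : ℝ}
    (hτ : ∀ (μ : ℝ) (v : ι → ℝ), v ≠ 0 → A *ᵥ v = μ • v → τ ≤ μ) {x : ι → ℝ}
    (hx : x ⬝ᵥ ((A - τ • 1) *ᵥ x) = 0) : A *ᵥ x = τ • x := by
  have := ((posSemidef_sub_smul_one_of_forall_le_eigenvalue hA hτ).dotProduct_mulVec_zero_iff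
    x).mp (by rwa [star_trivial])
  rwa [sub_mulVec, smul_mulVec, one_mulVec, sub_eq_zero] at this

theorem mulVec_one_eq_smul_one {A : Matrix ι ι ℝ} {k : ℝ} (h : ∀ i, ∑ j, A i j = k) :
    A *ᵥ 1 = k • 1 :=
  funext fun i => by simp [mulVec, dotProduct, h i]

theorem IsSymm.dotProduct_mulVec_sub_mean {M : Matrix ι ι ℝ} (hM : M.IsSymm)
    {r : ℝ} (hr : M *ᵥ 1 = r • 1) {x : ι → ℝ} {c : ℝ} (hc : c * Fintype.card ι = ∑ i, x i) :
    (x - c • 1) ⬝ᵥ (M *ᵥ (x - c • 1)) = x ⬝ᵥ (M *ᵥ x) - r * c * ∑ i, x i := by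
  have h1M : ∀ y, 1 ⬝ᵥ (M *ᵥ y) = r * ∑ i, y i := fun y => by
    rw [dotProduct_mulVec, ← mulVec_transpose, hM.eq, hr, smul_dotProduct, one_dotProduct,
      smul_eq_mul]
  have hM1 : ∀ y, y ⬝ᵥ (M *ᵥ 1) = r * ∑ i, y i := fun y => by
    rw [hr, dotProduct_smul, dotProduct_one, smul_eq_mul]
  have hsum : ∑ i, (x - c • 1) i = 0 := by
    simp [sum_sub_distrib, hc, mul_comm]
  rw [mulVec_sub, mulVec_smul, dotProduct_sub, dotProduct_smul, hM1, hsum, sub_dotProduct,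
    smul_dotProduct, h1M, smul_eq_mul]
  ring

end Matrix

def charVec {ι : Type*} [DecidableEq ι] (S : Finset ι) : ι → ℝ := fun i => if i ∈ S then 1 else 0

section charVec

variable {ι : Type*} [Fintype ι] [DecidableEq ι] (S : Finset ι)

theorem sum_charVec : ∑ i, charVec S i = #S := by
  simp [charVec]

theorem charVec_dotProduct_self : charVec S ⬝ᵥ charVec S = #S := by
  simp [charVec, dotProduct]

theorem charVec_dotProduct_mulVec_eq_zero {A : Matrix ι ι ℝ}
    (hS : ∀ i ∈ S, ∀ j ∈ S, A i j = 0) : charVec S ⬝ᵥ (A *ᵥ charVec S) = 0 := by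
  simp only [dotProduct, charVec, mulVec, mul_ite, mul_one, mul_zero, sum_ite_mem, univ_inter,
    ite_mul, one_mul, zero_mul]
  exact sum_eq_zero fun i hi => sum_eq_zero fun j hj => hS i hi j hj

theorem charVec_dotProduct_sub_smul_one_mulVec {A : Matrix ι ι ℝ}
    (hS : ∀ i ∈ S, ∀ j ∈ S, A i j = 0) (τ : ℝ) :
    charVec S ⬝ᵥ ((A - τ • 1) *ᵥ charVec S) = -τ * #S := by
  rw [sub_mulVec, smul_mulVec, one_mulVec, dotProduct_sub, dotProduct_smul,
    charVec_dotProduct_mulVec_eq_zero S hS, charVec_dotProduct_self, smul_eq_mul]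
  ring

theorem eq_univ_of_charVec_eq_smul_one {S : Finset ι} (hS : S.Nonempty) {c : ℝ}
    (h : charVec S = c • 1) : S = univ := by
  obtain ⟨i, hi⟩ := hS
  have hc : c = 1 := by simpa [charVec, hi] using (congrFun h i).symm
  refine eq_univ_of_forall fun j => ?_
  simpa [charVec, hc] using congrFun h j

theorem charVec_ne_smul_one {S : Finset ι} (hS : S.Nonempty) {A : Matrix ι ι ℝ} (hA : A ≠ 0)
    (hind : ∀ i ∈ S, ∀ j ∈ S, A i j = 0) (c : ℝ) : charVec S ≠ c • 1 := by
  intro h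
  obtain rfl := eq_univ_of_charVec_eq_smul_one hS h
  exact hA (ext fun i j => hind i (mem_univ i) j (mem_univ j))

end charVec

theorem stmt18_general (n k : ℕ)
    (A : Matrix (Fin n) (Fin n) ℝ) (hsym : A.IsSymm)
    (hloop : ∀ i, A i i = 0)
    (hreg : ∀ i, ∑ j, A i j = k)
    (τ : ℝ) (hτneg : τ < 0)
    (hτeig : ∃ v : Fin n → ℝ, v ≠ 0 ∧ A.mulVec v = τ • v)
    (hτmin : ∀ (μ : ℝ) (v : Fin n → ℝ), v ≠ 0 → A.mulVec v = μ • v → τ ≤ μ)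
    (S : Finset (Fin n)) (hind : ∀ i ∈ S, ∀ j ∈ S, i ≠ j → A i j = 0)
    (z : Fin n → ℝ) (hz : z = fun i => if i ∈ S then 1 else 0)
    (heq : (S.card : ℝ) = n * (-τ) / ((k : ℝ) - τ)) :
    ∃ (c : ℝ) (w : Fin n → ℝ), w ≠ 0 ∧ A.mulVec w = τ • w
      ∧ z = c • (fun _ => (1 : ℝ)) + w := by
  obtain rfl : z = charVec S := hz
  obtain ⟨v, hv0, hAv⟩ := hτeig
  have hA : A ≠ 0 := by
    rintro rfl
    simp [eq_comm, hτneg.ne, hv0] at hAv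
  obtain ⟨i, -⟩ := Function.ne_iff.mp hv0
  have hn : (0 : ℝ) < n := Nat.cast_pos.mpr i.pos
  have hkτ : (0 : ℝ) < k - τ := by linarith [k.cast_nonneg (α := ℝ)]
  rw [eq_div_iff hkτ.ne'] at heq
  have hSne : S.Nonempty := by
    rw [← card_pos, ← Nat.cast_pos (α := ℝ)]
    exact pos_of_mul_pos_left (heq ▸ mul_pos hn (neg_pos.mpr hτneg)) hkτ.le
  have hS : ∀ i ∈ S, ∀ j ∈ S, A i j = 0 := fun i hi j hj => by
    rcases eq_or_ne i j with rfl | hij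
    exacts [hloop i, hind i hi j hj hij]
  set c : ℝ := #S / n
  have hc : c * n = #S := div_mul_cancel₀ _ hn.ne'
  have hA1 : (A - τ • 1) *ᵥ 1 = ((k : ℝ) - τ) • 1 := by
    rw [sub_mulVec, mulVec_one_eq_smul_one hreg, smul_mulVec, one_mulVec, sub_smul]
  refine ⟨c, charVec S - c • 1, sub_ne_zero.mpr (charVec_ne_smul_one hSne hA hS c),
    mulVec_eq_smul_of_dotProduct_sub_smul_one_mulVec_eq_zero hsym hτmin ?_,
    (add_sub_cancel _ _).symm⟩
  rw [(hsym.sub (isSymm_one.smul τ)).dotProduct_mulVec_sub_mean hA1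
    (by rwa [Fintype.card_fin, sum_charVec]),
    charVec_dotProduct_sub_smul_one_mulVec S hS, sum_charVec]
  linear_combination (-c) * heq + τ * hc

/-- Equality in the Delsarte–Hoffman bound forces the characteristic vector `z` of `S`
to be a linear combination of the all-ones vector and a (nonzero) `τ`-eigenvector. -/
theorem stmt18 (n k : ℕ) (hn : 0 < n)
    (A : Matrix (Fin n) (Fin n) ℝ) (hsym : A.IsSymm)
    (h01 : ∀ i j, A i j = 0 ∨ A i j = 1) (hloop : ∀ i, A i i = 0)
    (hreg : ∀ i, ∑ j, A i j = k)
    (τ : ℝ) (hτneg : τ < 0)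
    (hτeig : ∃ v : Fin n → ℝ, v ≠ 0 ∧ A.mulVec v = τ • v)
    (hτmin : ∀ (μ : ℝ) (v : Fin n → ℝ), v ≠ 0 → A.mulVec v = μ • v → τ ≤ μ)
    (S : Finset (Fin n)) (hind : ∀ i ∈ S, ∀ j ∈ S, i ≠ j → A i j = 0)
    (z : Fin n → ℝ) (hz : z = fun i => if i ∈ S then 1 else 0)
    (heq : (S.card : ℝ) = n * (-τ) / ((k : ℝ) - τ)) :
    ∃ (c : ℝ) (w : Fin n → ℝ), w ≠ 0 ∧ A.mulVec w = τ • w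
      ∧ z = c • (fun _ => (1 : ℝ)) + w :=
  stmt18_general n k A hsym hloop hreg τ hτneg hτeig hτmin S hind z hz heq
end

section
/- Let q ≥ 2. Then (q²+q+1)·sqrt(q) / (q + sqrt(q) + 1) + q + 1 is strictly greater than (sqrt(q) + sqrt(q + 4(q+1)(q+sqrt(q)+1)/(q²+q+1))) / (2(q+sqrt(q)+1)/(q²+q+1)); that is, the loop-adjusted ratio bound for ER(q) is strictly better than the loopless ratio bound plus q+1. -/
/-! Write `s = √q`, `D = q + s + 1`, `N = q² + q + 1` and `c = (q + 1) D / N > 0`. Multiplying both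
sides by `2D / N`, the claim becomes `s + √(s² + 4c) < 2s + 2c`, and squaring shows
`√(s² + 4c) < s + 2c` as soon as `s + c > 1`, which holds because `s > 1`. -/

theorem Real.sqrt_sq_add_four_mul_lt {s c : ℝ} (hs : 0 ≤ s) (hc : 0 < c) (h : 1 < s + c) :
    √(s ^ 2 + 4 * c) < s + 2 * c := by
  rw [Real.sqrt_lt' (by positivity)]
  nlinarith

/-- For real `q ≥ 2`, the loop-aware bound (Abound1ERq) for `ER(q)` is strictly better
than the loopless ratio bound plus `q+1` (ratioboundERq). -/
theorem stmt19 (q : ℝ) (hq : 2 ≤ q) :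
    (Real.sqrt q + Real.sqrt (q + 4 * (q + 1) * (q + Real.sqrt q + 1)
        / (q ^ 2 + q + 1)))
      / (2 * (q + Real.sqrt q + 1) / (q ^ 2 + q + 1))
    < (q ^ 2 + q + 1) * Real.sqrt q / (q + Real.sqrt q + 1) + q + 1 := by
  set s := √q
  have hs_sq : s ^ 2 = q := Real.sq_sqrt (by linarith)
  have hs_gt_one : 1 < s := Real.lt_sqrt_of_sq_lt (by linarith)
  set c := (q + 1) * (q + s + 1) / (q ^ 2 + q + 1)
  have hc : 0 < c := by positivity
  have hroot : √(q + 4 * (q + 1) * (q + s + 1) / (q ^ 2 + q + 1)) < s + 2 * c := by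
    have h := Real.sqrt_sq_add_four_mul_lt (s := s) (by linarith) hc (by linarith)
    rwa [hs_sq, ← mul_div_assoc, ← mul_assoc] at h
  have hscale : ((q ^ 2 + q + 1) * s / (q + s + 1) + q + 1) * (2 * (q + s + 1) / (q ^ 2 + q + 1))
      = 2 * s + 2 * c := by
    simp only [c]
    field_simp
    ring
  rw [div_lt_iff₀ (by positivity), hscale]
  linarith
end
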